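/- arXiv:0909.4009 — 6 statements merged into one kernel-verified Lean document; each statement's English description precedes it below -/
import Mathlib

section
/- For every positive integers r and n, the map sending a colored sequence f = (f_1^{c_1}, ..., f_n^{c_n}) in N_0^{(r,n)} (n-tuples of colored nonnegative integers with colors in {0,...,r-1}, where f_i = 0 forces c_i = 0) to the pair (π(f), λ(f)) is a bijection between N_0^{(r,n)} and G(r,n) × P_n, where G(r,n) = Z_r ≀ S_n, P_n is the set of partitions with at most n parts (nondecreasing sequences of n nonnegative integers), π(f) is the unique colored permutation γ = (c_1,...,c_n;σ) with f_{σ(1)} ≤ ... ≤ f_{σ(n)}, c_i(γ) = c_{σ(i)}(f), and γ(i) < γ(i+1) whenever f_{σ(i)} = f_{σ(i+1)}, and λ(f)_i := f_{σ(i)} - #{j ∈ Des_G(γ) : j ≤ i-1}. -/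
open Finset

namespace Paper

/-- An element of `G(r,n) = ℤ_r ≀ S_n`: a pair (underlying permutation, color vector). -/
abbrev CPerm (r n : ℕ) := Equiv.Perm (Fin n) × (Fin n → Fin r)

/-- A colored sequence: values and colors. -/
abbrev CSeq (r n : ℕ) := (Fin n → ℕ) × (Fin n → Fin r)

variable {r n : ℕ}

/-- The order on colored integers (value, color):
`n^{r-1} < ⋯ < n^1 < ⋯ < 1^{r-1} < ⋯ < 1^1 < 0 < 1 < ⋯ < n`.
`clt a b` means `a < b`. -/
def clt (a b : ℕ × ℕ) : Prop :=
  (0 < a.2 ∧ b.2 = 0) ∨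
  (0 < a.2 ∧ 0 < b.2 ∧ (b.1 < a.1 ∨ (a.1 = b.1 ∧ b.2 < a.2))) ∨
  (a.2 = 0 ∧ b.2 = 0 ∧ a.1 < b.1)

instance (a b : ℕ × ℕ) : Decidable (clt a b) := by unfold clt; exact inferInstance

/-- The colored entry of `γ` at (0-based) position `i`: value `σ(i)` (1-based) with its color. -/
def entry (γ : CPerm r n) (i : Fin n) : ℕ × ℕ := ((γ.1 i : ℕ) + 1, (γ.2 i : ℕ))

/-- Window value `γ(i)` for `i ∈ [0,n]` (1-based positions), with `γ(0) := 0`. -/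
def wval (γ : CPerm r n) (i : ℕ) : ℕ × ℕ :=
  if h : 1 ≤ i ∧ i ≤ n then ((γ.1 ⟨i - 1, by omega⟩ : ℕ) + 1, (γ.2 ⟨i - 1, by omega⟩ : ℕ))
  else (0, 0)

/-- Descent set `Des_G(γ) = {i ∈ [0,n-1] : γ(i) > γ(i+1)}`, with `γ(0) := 0`. -/
def DesG (γ : CPerm r n) : Finset ℕ :=
  (range n).filter fun i => clt (wval γ (i + 1)) (wval γ i)

def desG (γ : CPerm r n) : ℕ := (DesG γ).card

def majG (γ : CPerm r n) : ℕ := ∑ i ∈ DesG γ, i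

def colG (γ : CPerm r n) : ℕ := ∑ i, (γ.2 i : ℕ)

/-- Number of inversions: pairs `i < j` with `γ(i) > γ(j)` in the colored order. -/
def invG (γ : CPerm r n) : ℕ :=
  ((univ : Finset (Fin n × Fin n)).filter fun p =>
    p.1 < p.2 ∧ clt (entry γ p.2) (entry γ p.1)).card

/-- Length `ℓ_G(γ) = inv(γ) + Σ_{c_i ≠ 0} (σ(i) + c_i - 1)` (σ(i) 1-based). -/
def lenG (γ : CPerm r n) : ℕ :=
  invG γ + ∑ i ∈ univ.filter (fun i => (γ.2 i : ℕ) ≠ 0), ((γ.1 i : ℕ) + (γ.2 i : ℕ))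

/-- Membership in `N_0^{(r,n)}`: a zero value has color 0. -/
def ValidSeq (f : CSeq r n) : Prop := ∀ i, f.1 i = 0 → (f.2 i : ℕ) = 0

/-- The defining property of `π(f) = γ = (c;σ)`:
`f_{σ(1)} ≤ … ≤ f_{σ(n)}`, `c_i(γ) = c_{σ(i)}(f)`, and `γ(i) < γ(i+1)` whenever
`f_{σ(i)} = f_{σ(i+1)}`. -/
def isPi (f : CSeq r n) (γ : CPerm r n) : Prop :=
  (∀ i j : Fin n, i ≤ j → f.1 (γ.1 i) ≤ f.1 (γ.1 j)) ∧
  (∀ i, γ.2 i = f.2 (γ.1 i)) ∧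
  (∀ i j : Fin n, (i : ℕ) + 1 = (j : ℕ) → f.1 (γ.1 i) = f.1 (γ.1 j) →
    clt (entry γ i) (entry γ j))

def maxf (f : CSeq r n) : ℕ := univ.sup f.1

def sumf (f : CSeq r n) : ℕ := ∑ i, f.1 i

/-- The partition `λ(f)` (relative to `γ = π(f)`), with values in `ℤ`:
`λ_i = f_{σ(i)} - #{j ∈ Des_G(γ) : j ≤ i-1}` (1-based `i`). -/
def lamZ (f : CSeq r n) (γ : CPerm r n) (i : Fin n) : ℤ :=
  (f.1 (γ.1 i) : ℤ) - ((DesG γ).filter (· ≤ (i : ℕ))).card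

/-- 1-based reading of an `n`-tuple, with value `0` at index `0` (and outside `[1,n]`). -/
def mval (μ : Fin n → ℕ) (i : ℕ) : ℕ :=
  if h : 1 ≤ i ∧ i ≤ n then μ ⟨i - 1, by omega⟩ else 0

/-- `μ` is `γ`-compatible: `μ_i < μ_{i+1}` for all `i ∈ Des_G(γ)` (with `μ_0 := 0`). -/
def compat (μ : Fin n → ℕ) (γ : CPerm r n) : Prop :=
  ∀ i ∈ DesG γ, mval μ i < mval μ (i + 1)

/-- The skew inverse `γ̃⁻¹ = (c_{σ⁻¹(1)},…,c_{σ⁻¹(n)}; σ⁻¹)`. -/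
def skewInv (γ : CPerm r n) : CPerm r n := (γ.1⁻¹, fun i => γ.2 (γ.1⁻¹ i))

/-- The group inverse: `γ⁻¹ = (c'; σ⁻¹)` with `c'_i = (r - c_{σ⁻¹(i)}) mod r`. -/
def cinv (γ : CPerm r n) : CPerm r n :=
  (γ.1⁻¹, fun i =>
    ⟨(r - (γ.2 (γ.1⁻¹ i) : ℕ)) % r,
      Nat.mod_lt _ (Nat.lt_of_le_of_lt (Nat.zero_le _) (γ.2 (γ.1⁻¹ i)).isLt)⟩)

/-- The group law of `G(r,n)`: `(c;σ)·(d;τ) = ((d_i + c_{τ(i)}) mod r; στ)`. -/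
def cmul (x y : CPerm r n) : CPerm r n :=
  (x.1 * y.1, fun i =>
    ⟨((y.2 i : ℕ) + (x.2 (y.1 i) : ℕ)) % r,
      Nat.mod_lt _ (Nat.lt_of_le_of_lt (Nat.zero_le _) (y.2 i).isLt)⟩)

/-- The color-forgetting projection `φ : G(r,n) → B_n = G(2,n)`. -/
def phi (γ : CPerm r n) : CPerm 2 n := (γ.1, fun i => ⟨min (γ.2 i : ℕ) 1, by omega⟩)

/-- `[m]_p = 1 + p + ⋯ + p^{m-1}`. -/
def qint {R : Type*} [CommRing R] (p : R) (m : ℕ) : R := ∑ j ∈ range m, p ^ j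

/-- `[m]_p! = [1]_p [2]_p ⋯ [m]_p`. -/
def qfact {R : Type*} [CommRing R] (p : R) (m : ℕ) : R := ∏ j ∈ range m, qint p (j + 1)

/-- `[m̂]_{b,p}! = (1+bp)(1+bp²)⋯(1+bp^m)·[m]_p!`. -/
def hqfact {R : Type*} [CommRing R] (b p : R) (m : ℕ) : R :=
  (∏ i ∈ range m, (1 + b * p ^ (i + 1))) * qfact p m

/-- A formal power series in two variables `X 0, X 1` from its coefficients. -/
def seriesOf2 (F : ℕ → ℕ → ℚ) : MvPowerSeries (Fin 2) ℚ := fun d => F (d 0) (d 1)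

/-- A formal power series in three variables from its coefficients. -/
def seriesOf3 (F : ℕ → ℕ → ℕ → ℚ) : MvPowerSeries (Fin 3) ℚ := fun d => F (d 0) (d 1) (d 2)


/-!
Along `σ = π(f)` the values `f_{σ(i)}` increase weakly, and strictly at every descent of `π(f)`:
equal adjacent values force an ascent. So subtracting the number of descents up to `i` keeps the
sequence nondecreasing, and it stays nonnegative because a descent at `0` means a nonzero first
color, hence a nonzero first value. Conversely, from `γ` and `λ` one recovers
`f_{σ(i)} = λ_i + #{j ∈ Des_G(γ) : j ≤ i - 1}` with the colors of `γ`. This is a colored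
sequence since a nonzero color at position `i` forces a descent at or before `i`, and `π(f) = γ`
since adjacent equal values sit at non-descents, where `γ(i) < γ(i+1)` by totality of the order.
-/

lemma clt_asymm {a b : ℕ × ℕ} (h : clt a b) : ¬ clt b a := by
  unfold clt at *; omega

lemma clt_or_clt_of_fst_ne {a b : ℕ × ℕ} (h : a.1 ≠ b.1) : clt a b ∨ clt b a := by
  unfold clt; omega

lemma _root_.Fin.monotone_of_le_of_val_add_one_eq {α : Type*} [Preorder α] {m : ℕ}
    {g : Fin m → α} (h : ∀ i j : Fin m, (i : ℕ) + 1 = j → g i ≤ g j) : Monotone g := by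
  cases m with
  | zero => exact fun i => i.elim0
  | succ m => exact Fin.monotone_iff_le_succ.2 fun i => h _ _ (by simp)

section Descents

variable (γ : CPerm r n)

lemma wval_add_one (i : Fin n) : wval γ ((i : ℕ) + 1) = entry γ i := by
  unfold wval entry
  rw [dif_pos ⟨by omega, by omega⟩]
  rfl

lemma mem_DesG_iff_of_val_add_one_eq {i j : Fin n} (hij : (i : ℕ) + 1 = j) :
    (j : ℕ) ∈ DesG γ ↔ clt (entry γ j) (entry γ i) := by
  have hwi : wval γ j = entry γ i := by rw [← hij, wval_add_one]
  simp [DesG, wval_add_one, hwi]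

lemma zero_mem_DesG_iff {i : Fin n} (hi : (i : ℕ) = 0) : 0 ∈ DesG γ ↔ (γ.2 i : ℕ) ≠ 0 := by
  have h1 : wval γ 1 = entry γ i := by rw [← wval_add_one, hi]
  simp only [DesG, mem_filter, mem_range, zero_add, h1]
  simp [wval, clt, entry, Nat.pos_iff_ne_zero, i.pos.ne']

def desCount (i : ℕ) : ℕ := ((DesG γ).filter (· ≤ i)).card

lemma lamZ_eq_sub_desCount (f : CSeq r n) (i : Fin n) :
    lamZ f γ i = (f.1 (γ.1 i) : ℤ) - desCount γ i := rfl

lemma desCount_eq_sum (i : ℕ) :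
    desCount γ i = ∑ k ∈ range (i + 1), if k ∈ DesG γ then 1 else 0 := by
  rw [← card_filter, desCount]
  congr 1
  ext k
  simp [and_comm]

lemma desCount_mono : Monotone (desCount γ) :=
  fun _ _ hab => card_le_card fun _ hk => by
    simp only [mem_filter] at hk ⊢
    exact ⟨hk.1, hk.2.trans hab⟩

lemma desCount_add_one (i : ℕ) :
    desCount γ (i + 1) = desCount γ i + if i + 1 ∈ DesG γ then 1 else 0 := by
  simp only [desCount_eq_sum, sum_range_succ _ (i + 1)]

lemma desCount_eq_of_val_add_one_eq {i j : Fin n} (hij : (i : ℕ) + 1 = j) :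
    desCount γ j = desCount γ i + if (j : ℕ) ∈ DesG γ then 1 else 0 := by
  rw [← hij, desCount_add_one]

lemma desCount_zero {i : Fin n} (hi : (i : ℕ) = 0) :
    desCount γ 0 = if (γ.2 i : ℕ) = 0 then 0 else 1 := by
  rw [desCount_eq_sum, sum_range_one]
  by_cases hc : (γ.2 i : ℕ) = 0 <;> simp [zero_mem_DesG_iff γ hi, hc]

/-- Colors `≠ 0` lie below `γ(0) = 0`, so the last color change from `0` before a nonzero color,
or position `0` itself, is a descent. -/
lemma desCount_pos_of_color_ne_zero (i : Fin n) (hi : (γ.2 i : ℕ) ≠ 0) : 0 < desCount γ i := by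
  obtain ⟨k, hk⟩ := i
  induction k with
  | zero => simp [desCount_zero γ (i := ⟨0, hk⟩) rfl, hi]
  | succ k ih =>
    by_cases hprev : (γ.2 ⟨k, by omega⟩ : ℕ) = 0
    · have hdes : k + 1 ∈ DesG γ := by
        rw [mem_DesG_iff_of_val_add_one_eq γ (i := ⟨k, by omega⟩) (j := ⟨k + 1, hk⟩) rfl]
        exact Or.inl ⟨Nat.pos_of_ne_zero hi, hprev⟩
      simp [desCount_add_one, hdes]
    · exact (ih (by omega) hprev).trans_le (desCount_mono γ k.le_succ)

end Descents

namespace isPi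

variable {f : CSeq r n} {γ : CPerm r n}

lemma lt_of_mem_DesG (hpi : isPi f γ) {i j : Fin n} (hij : (i : ℕ) + 1 = j)
    (hdes : (j : ℕ) ∈ DesG γ) : f.1 (γ.1 i) < f.1 (γ.1 j) :=
  (hpi.1 i j (Fin.le_def.2 (by omega))).lt_of_ne fun heq =>
    clt_asymm (hpi.2.2 i j hij heq) ((mem_DesG_iff_of_val_add_one_eq γ hij).1 hdes)

lemma monotone_lamZ (hpi : isPi f γ) : Monotone (lamZ f γ) := by
  refine Fin.monotone_of_le_of_val_add_one_eq fun i j hij => ?_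
  have hle := hpi.1 i j (Fin.le_def.2 (by omega))
  have hstep := desCount_eq_of_val_add_one_eq γ hij
  simp only [lamZ_eq_sub_desCount, hstep]
  split_ifs with hdes
  · have := hpi.lt_of_mem_DesG hij hdes
    push_cast; omega
  · push_cast; omega

lemma lamZ_nonneg (hpi : isPi f γ) (hf : ValidSeq f) (i : Fin n) : 0 ≤ lamZ f γ i := by
  let i₀ : Fin n := ⟨0, i.pos⟩
  have h₀ : 0 ≤ lamZ f γ i₀ := by
    rw [lamZ_eq_sub_desCount, desCount_zero γ (i := i₀) rfl]
    split_ifs with hc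
    · simp
    · have : f.1 (γ.1 i₀) ≠ 0 := fun h0 => hc (by rw [hpi.2.1 i₀]; exact hf _ h0)
      push_cast; omega
  exact h₀.trans (hpi.monotone_lamZ (Fin.le_def.2 (Nat.zero_le _)))

lemma eq_of_lamZ_eq {g : CSeq r n} (hf : isPi f γ) (hg : isPi g γ)
    (hlam : lamZ f γ = lamZ g γ) : f = g := by
  have hval : ∀ i, f.1 (γ.1 i) = g.1 (γ.1 i) := fun i => by
    have := congrFun hlam i
    simp only [lamZ_eq_sub_desCount] at this
    omega
  refine Prod.ext (funext fun k => ?_) (funext fun k => ?_)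
  · simpa using hval (γ.1⁻¹ k)
  · have hfk := hf.2.1 (γ.1⁻¹ k)
    have hgk := hg.2.1 (γ.1⁻¹ k)
    simp only [Equiv.Perm.inv_def, Equiv.apply_symm_apply] at hfk hgk
    rw [← hfk, ← hgk]

end isPi

/-- The preimage of `(γ, μ)` under `f ↦ (π(f), λ(f))`. -/
def seqOf (γ : CPerm r n) (μ : Fin n → ℤ) : CSeq r n :=
  (fun k => (μ (γ.1⁻¹ k)).toNat + desCount γ (γ.1⁻¹ k), fun k => γ.2 (γ.1⁻¹ k))

section SeqOf

variable (γ : CPerm r n) {μ : Fin n → ℤ}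

lemma seqOf_fst_apply (i : Fin n) : (seqOf γ μ).1 (γ.1 i) = (μ i).toNat + desCount γ i := by
  simp [seqOf]

lemma validSeq_seqOf (μ : Fin n → ℤ) : ValidSeq (seqOf γ μ) := by
  intro k hk
  by_contra hc
  have := desCount_pos_of_color_ne_zero γ (γ.1⁻¹ k) hc
  simp only [seqOf] at hk
  omega

lemma isPi_seqOf (hμ : Monotone μ) : isPi (seqOf γ μ) γ := by
  refine ⟨fun i j hij => ?_, fun i => by simp [seqOf], fun i j hij heq => ?_⟩
  · rw [seqOf_fst_apply, seqOf_fst_apply]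
    have := Int.toNat_le_toNat (hμ hij)
    have := desCount_mono γ (Fin.le_def.1 hij)
    omega
  · rw [seqOf_fst_apply, seqOf_fst_apply] at heq
    have hμle := Int.toNat_le_toNat (hμ (Fin.le_def.2 (by omega) : i ≤ j))
    have hstep := desCount_eq_of_val_add_one_eq γ hij
    have hdes : (j : ℕ) ∉ DesG γ := fun hdes => by rw [hstep, if_pos hdes] at heq; omega
    have hne : (entry γ i).1 ≠ (entry γ j).1 := fun h =>
      absurd (congrArg Fin.val (γ.1.injective (Fin.ext (Nat.add_right_cancel h)))) (by omega)
    exact (clt_or_clt_of_fst_ne hne).resolve_right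
      (mt (mem_DesG_iff_of_val_add_one_eq γ hij).2 hdes)

lemma lamZ_seqOf (hμ : ∀ i, 0 ≤ μ i) : lamZ (seqOf γ μ) γ = μ := by
  funext i
  rw [lamZ_eq_sub_desCount, seqOf_fst_apply]
  have := hμ i
  push_cast
  omega

end SeqOf

theorem stmt0_general (r n : ℕ)
    (π : CSeq r n → CPerm r n)
    (hπ : ∀ f, ValidSeq f → isPi f (π f) ∧ ∀ γ, isPi f γ → γ = π f) :
    (∀ f : CSeq r n, ValidSeq f → ∃! γ : CPerm r n, isPi f γ) ∧
    Set.BijOn (fun f : CSeq r n => (π f, lamZ f (π f)))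
      {f : CSeq r n | ValidSeq f}
      {p : CPerm r n × (Fin n → ℤ) | Monotone p.2 ∧ ∀ i, 0 ≤ p.2 i} := by
  refine ⟨fun f hf => ⟨π f, hπ f hf⟩, fun f hf => ?_, fun f hf g hg hfg => ?_, ?_⟩
  · exact ⟨(hπ f hf).1.monotone_lamZ, (hπ f hf).1.lamZ_nonneg hf⟩
  · obtain ⟨hγ, hlam⟩ := Prod.mk.inj hfg
    have hg' : isPi g (π f) := hγ ▸ (hπ g hg).1
    exact (hπ f hf).1.eq_of_lamZ_eq hg' (by rw [hlam, ← hγ])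
  · rintro ⟨γ, μ⟩ ⟨hmono, hnonneg⟩
    have hγ : π (seqOf γ μ) = γ :=
      ((hπ _ (validSeq_seqOf γ μ)).2 γ (isPi_seqOf γ hmono)).symm
    exact ⟨seqOf γ μ, validSeq_seqOf γ μ, by simp only [hγ, lamZ_seqOf γ hnonneg]⟩

/-- Proposition 3.6: the map `f ↦ (π(f), λ(f))` is a bijection between
`N_0^{(r,n)}` and `G(r,n) × P_n`, where `π(f)` is the unique colored permutation associated
with `f` and `λ(f)` is the corresponding partition (nonnegative, nondecreasing). -/
theorem stmt0 (r n : ℕ) (hr : 0 < r) (hn : 0 < n)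
    (π : CSeq r n → CPerm r n)
    (hπ : ∀ f, ValidSeq f → isPi f (π f) ∧ ∀ γ, isPi f γ → γ = π f) :
    (∀ f : CSeq r n, ValidSeq f → ∃! γ : CPerm r n, isPi f γ) ∧
    Set.BijOn (fun f : CSeq r n => (π f, lamZ f (π f)))
      {f : CSeq r n | ValidSeq f}
      {p : CPerm r n × (Fin n → ℤ) | Monotone p.2 ∧ ∀ i, 0 ≤ p.2 i} :=
  stmt0_general r n π hπ

end Paper
end

section
/- For f ∈ N_0^{(r,n)} with γ := π(f) and λ := λ(f) (as in the Garsia–Gessel type bijection for G(r,n)), one has max(f) = max(λ) + des_G(γ) and |f| = |λ| + n·des_G(γ) − maj(γ), where max(f) = max_i f_i, |f| = Σ_i f_i, des_G(γ) = |Des_G(γ)|, and maj(γ) = Σ_{i ∈ Des_G(γ)} i. -/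
/-!
At every descent `j` of `γ = π(f)` the sorted values strictly increase, `f_{σ(j)} < f_{σ(j+1)}`,
so subtracting the number of descents seen so far keeps `λ` weakly increasing. Hence both `f`
and `λ` attain their maximum at the last position, where `λ_n = f_{σ(n)} - des(γ)`. Summing,
each descent `j` is subtracted from the `n - j` entries `λ_{j+1}, …, λ_n`, for a total of
`n·des(γ) - maj(γ)`.
-/

open Finset

lemma card_filter_le_succ (s : Finset ℕ) (k : ℕ) :
    #{j ∈ s | j ≤ k + 1} = #{j ∈ s | j ≤ k} + if k + 1 ∈ s then 1 else 0 := by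
  simp_rw [Nat.le_succ_iff, filter_or, filter_eq']
  split_ifs with h
  · rw [card_union_of_disjoint (by simp), card_singleton]
  · simp

lemma sum_range_card_filter_le (s : Finset ℕ) (n : ℕ) :
    ∑ i ∈ range n, #{j ∈ s | j ≤ i} = ∑ j ∈ s, (n - j) := by
  simp_rw [card_filter]
  rw [sum_comm]
  refine sum_congr rfl fun j _ => ?_
  rw [← card_filter, range_eq_Ico, Ico_filter_le, Nat.card_Ico, max_eq_right (Nat.zero_le j)]

lemma Fin.sup'_univ_eq_last_of_monotone {α : Type*} [LinearOrder α] {m : ℕ}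
    {g : Fin (m + 1) → α} (hg : Monotone g) (h : (univ : Finset (Fin (m + 1))).Nonempty) :
    univ.sup' h g = g (Fin.last m) :=
  le_antisymm (sup'_le _ _ fun i _ => hg (Fin.le_last i)) (le_sup' g (mem_univ _))

namespace Paper

variable {r n : ℕ}

lemma wval_succ (γ : CPerm r n) {k : ℕ} (hk : k < n) :
    wval γ (k + 1) = entry γ ⟨k, hk⟩ := by
  rw [wval, dif_pos ⟨by omega, by omega⟩]; rfl

lemma lt_of_mem_DesG {γ : CPerm r n} {j : ℕ} (hj : j ∈ DesG γ) : j < n :=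
  mem_range.1 (mem_filter.1 hj).1

/-- Equal values of `f` are listed in increasing colored order, so a descent of `π(f)` cannot
occur between them. -/
lemma isPi.apply_lt_of_mem_DesG {f : CSeq r n} {γ : CPerm r n} (hγ : isPi f γ) {i j : Fin n}
    (hij : (i : ℕ) + 1 = j) (hj : (j : ℕ) ∈ DesG γ) :
    f.1 (γ.1 i) < f.1 (γ.1 j) := by
  have hdes : clt (entry γ j) (entry γ i) := by
    have hi : wval γ j = entry γ i := by rw [← hij, wval_succ γ i.isLt]
    simpa [wval_succ γ j.isLt, hi] using (mem_filter.1 hj).2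
  refine lt_of_le_of_ne (hγ.1 i j (by rw [Fin.le_def]; omega)) fun heq => ?_
  exact clt_asymm hdes (hγ.2.2 i j hij heq)

section Pos

variable {m : ℕ} {f : CSeq r (m + 1)} {γ : CPerm r (m + 1)}

lemma isPi.maxf_eq (hγ : isPi f γ) : maxf f = f.1 (γ.1 (Fin.last m)) := by
  refine le_antisymm (Finset.sup_le fun i _ => ?_) (le_sup (mem_univ _))
  simpa using hγ.1 (γ.1⁻¹ i) (Fin.last m) (Fin.le_last _)

lemma isPi.lamZ_monotone (hγ : isPi f γ) : Monotone (lamZ f γ) := by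
  refine Fin.monotone_iff_le_succ.2 fun i => ?_
  have hle := hγ.1 i.castSucc i.succ (Fin.castSucc_le_succ i)
  simp only [lamZ, Fin.val_succ, Fin.val_castSucc, card_filter_le_succ]
  split_ifs with hd
  · have := hγ.apply_lt_of_mem_DesG (i := i.castSucc) (j := i.succ) rfl hd
    push_cast; omega
  · push_cast; omega

lemma lamZ_last : lamZ f γ (Fin.last m) = f.1 (γ.1 (Fin.last m)) - desG γ := by
  rw [lamZ, filter_true_of_mem fun j hj => Nat.le_of_lt_succ (lt_of_mem_DesG hj), desG]

end Pos

lemma sum_lamZ (f : CSeq r n) (γ : CPerm r n) :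
    ∑ i, lamZ f γ i = ∑ i, (f.1 (γ.1 i) : ℤ) - (n * desG γ - majG γ) := by
  have hcount : ∑ i : Fin n, (#{j ∈ DesG γ | j ≤ (i : ℕ)} : ℤ) = n * desG γ - majG γ := by
    rw [Fin.sum_univ_eq_sum_range (fun i => (#{j ∈ DesG γ | j ≤ (i : ℕ)} : ℤ)), ← Nat.cast_sum,
      sum_range_card_filter_le, Nat.cast_sum,
      sum_congr rfl fun j hj => Nat.cast_sub (lt_of_mem_DesG hj).le]
    simp [sum_sub_distrib, desG, majG, mul_comm]
  simp only [lamZ, sum_sub_distrib, hcount]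

theorem stmt1_general (r n : ℕ) (hn : 0 < n)
    (π : CSeq r n → CPerm r n)
    (hπ : ∀ f, ValidSeq f → isPi f (π f) ∧ ∀ γ, isPi f γ → γ = π f)
    (f : CSeq r n) (hf : ValidSeq f) :
    (maxf f : ℤ) =
      univ.sup' ((Finset.univ_nonempty_iff).2 (Fin.pos_iff_nonempty.1 hn)) (lamZ f (π f))
        + desG (π f) ∧
    (sumf f : ℤ) = (∑ i, lamZ f (π f) i) + n * desG (π f) - majG (π f) := by
  obtain ⟨m, rfl⟩ : ∃ m, n = m + 1 := ⟨n - 1, by omega⟩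
  have hγ := (hπ f hf).1
  refine ⟨?_, ?_⟩
  · rw [hγ.maxf_eq, Fin.sup'_univ_eq_last_of_monotone hγ.lamZ_monotone, lamZ_last]
    ring
  · rw [sum_lamZ, sumf, Nat.cast_sum, ← Equiv.sum_comp (π f).1]
    ring

/-- Proposition 3.6, equations (3.4)-(3.5): for `f ∈ N_0^{(r,n)}` with
`γ = π(f)` and `λ = λ(f)`, one has `max(f) = max(λ) + des_G(γ)` and
`|f| = |λ| + n·des_G(γ) − maj(γ)`. -/
theorem stmt1 (r n : ℕ) (hr : 0 < r) (hn : 0 < n)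
    (π : CSeq r n → CPerm r n)
    (hπ : ∀ f, ValidSeq f → isPi f (π f) ∧ ∀ γ, isPi f γ → γ = π f)
    (f : CSeq r n) (hf : ValidSeq f) :
    (maxf f : ℤ) =
      univ.sup' ((Finset.univ_nonempty_iff).2 (Fin.pos_iff_nonempty.1 hn)) (lamZ f (π f))
        + desG (π f) ∧
    (sumf f : ℤ) = (∑ i, lamZ f (π f) i) + n * desG (π f) - majG (π f) :=
  stmt1_general r n hn π hπ f hf

end Paper
end

section
/- Let φ: G(r,n) → B_n be the color-forgetting projection sending (c_1,...,c_n;σ) to (ĉ_1,...,ĉ_n;σ) where ĉ_i = 0 if c_i = 0 and ĉ_i = 1 if c_i ≥ 1. Then for every γ ∈ G(r,n): Des_G(γ) = Des_B(φ(γ)) and Des_G(γ^{-1}) = Des_B(φ(γ)^{-1}). -/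
open Finset

namespace Paper

variable {r n : ℕ}

/-!
Two colored integers with distinct absolute values are compared in the order of `G(r,n)`
according to their absolute values and to which of them carry a nonzero color, the nonzero
color itself playing no role. The consecutive window values `γ(i), γ(i+1)` always have distinct
absolute values, so `Des_G(γ)` depends only on `σ` and on the set of positions with color `0`.
Both `φ` and inversion preserve this data: `φ` keeps zero colors and sends nonzero ones to `1`,
and the inverse of `(c; σ)` has colors `-c_{σ⁻¹(i)}`, which vanish exactly when `c_{σ⁻¹(i)}` does.
-/

lemma clt_congr {a b a' b' : ℕ × ℕ} (hab : a.1 ≠ b.1) (ha : a.1 = a'.1) (hb : b.1 = b'.1)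
    (ha₂ : a.2 = 0 ↔ a'.2 = 0) (hb₂ : b.2 = 0 ↔ b'.2 = 0) : clt a b ↔ clt a' b' := by
  unfold clt
  omega

lemma wval_succ_fst_ne (γ : CPerm r n) {i : ℕ} (hi : i < n) :
    (wval γ (i + 1)).1 ≠ (wval γ i).1 := by
  rcases Nat.eq_zero_or_pos i with rfl | hpos
  · simp [wval, show 1 ≤ n by omega]
  · have hne : (⟨i, hi⟩ : Fin n) ≠ ⟨i - 1, by omega⟩ := by simp only [ne_eq, Fin.mk.injEq]; omega
    have := Fin.val_ne_of_ne (γ.1.injective.ne hne)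
    simp only [wval, dif_pos (show 1 ≤ i + 1 ∧ i + 1 ≤ n by omega),
      dif_pos (show 1 ≤ i ∧ i ≤ n by omega), Nat.add_sub_cancel]
    omega

lemma wval_congr {s : ℕ} {γ : CPerm r n} {δ : CPerm s n} (hσ : γ.1 = δ.1)
    (hc : ∀ i, (γ.2 i : ℕ) = 0 ↔ (δ.2 i : ℕ) = 0) (i : ℕ) :
    (wval γ i).1 = (wval δ i).1 ∧ ((wval γ i).2 = 0 ↔ (wval δ i).2 = 0) := by
  unfold wval
  split_ifs
  · exact ⟨by rw [hσ], hc _⟩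
  · simp

lemma DesG_congr {s : ℕ} {γ : CPerm r n} {δ : CPerm s n} (hσ : γ.1 = δ.1)
    (hc : ∀ i, (γ.2 i : ℕ) = 0 ↔ (δ.2 i : ℕ) = 0) : DesG γ = DesG δ := by
  refine filter_congr fun i hi => ?_
  obtain ⟨h₁, h₁'⟩ := wval_congr hσ hc (i + 1)
  obtain ⟨h₀, h₀'⟩ := wval_congr hσ hc i
  exact clt_congr (wval_succ_fst_ne γ (mem_range.mp hi)) h₁ h₀ h₁' h₀'

lemma phi_snd_eq_zero_iff (γ : CPerm r n) (i : Fin n) :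
    ((phi γ).2 i : ℕ) = 0 ↔ (γ.2 i : ℕ) = 0 := by
  simp only [phi]
  omega

lemma cinv_snd_eq_zero_iff (γ : CPerm r n) (i : Fin n) :
    ((cinv γ).2 i : ℕ) = 0 ↔ (γ.2 (γ.1⁻¹ i) : ℕ) = 0 := by
  simp only [cinv]
  have hlt := (γ.2 (γ.1⁻¹ i)).isLt
  generalize (γ.2 (γ.1⁻¹ i) : ℕ) = c at hlt ⊢
  rcases Nat.eq_zero_or_pos c with rfl | hc
  · simp
  · rw [Nat.mod_eq_of_lt (by omega)]
    omega

theorem stmt5_general (r n : ℕ) (γ : CPerm r n) :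
    DesG γ = DesG (phi γ) ∧ DesG (cinv γ) = DesG (cinv (phi γ)) := by
  refine ⟨DesG_congr rfl fun i => (phi_snd_eq_zero_iff γ i).symm, DesG_congr rfl fun i => ?_⟩
  rw [cinv_snd_eq_zero_iff, cinv_snd_eq_zero_iff, phi_snd_eq_zero_iff]
  rfl

/-- Lemma 3.12, parts 1 and 2: for the color-forgetting projection
`φ : G(r,n) → B_n`, `Des_G(γ) = Des_B(φ(γ))` and `Des_G(γ⁻¹) = Des_B(φ(γ)⁻¹)`. -/
theorem stmt5 (r n : ℕ) (hr : 2 ≤ r) (γ : CPerm r n) :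
    DesG γ = DesG (phi γ) ∧ DesG (cinv γ) = DesG (cinv (phi γ)) :=
  stmt5_general r n γ

end Paper
end

section
/- Let φ: G(r,n) → B_n be the color-forgetting projection. For any fixed signed permutation γ̂ ∈ B_n, one has Σ_{γ ∈ G(r,n), φ(γ)=γ̂} p^{ℓ_G(γ)} a^{col(γ)} = p^{ℓ_B(γ̂)} (a[r−1]_{ap})^{neg(γ̂)}, where [r−1]_{ap} = 1 + ap + ... + (ap)^{r−2}, col(γ) = Σ_i c_i, neg(γ̂) is the number of entries of γ̂ with color 1, and ℓ_G(γ) = inv(γ) + Σ_{c_i≠0}(σ(i) + c_i − 1) with inv(γ) the number of pairs i<j with γ(i)>γ(j) in the colored order. -/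
/-!
The fiber of `φ` over `γ̂ = (ĉ; σ)` consists of the `(c; σ)` with `c_i = 0` exactly where
`ĉ_i = 0`. Since the values `σ(i)` are distinct, the colored order compares two entries of such a
`γ` as it compares the corresponding entries of `γ̂`, so `inv` is constant on the fiber. The weight
`p^ℓ a^col` then factors over positions, and a position with `ĉ_i = 1` contributes
`∑_{c=1}^{r-1} p^{σ(i)+c-1} a^c = p^{σ(i)} · a[r-1]_{ap}`, which is its factor in the weight of `γ̂`.
-/

open Finset

namespace Paper

variable {r n : ℕ}

lemma clt_truncColor_iff (a b : ℕ × ℕ) (hab : a.1 ≠ b.1) :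
    clt (a.1, min a.2 1) (b.1, min b.2 1) ↔ clt a b := by
  unfold clt; omega

lemma invG_phi (γ : CPerm r n) : invG (phi γ) = invG γ := by
  unfold invG
  congr 1
  refine filter_congr fun q _ => and_congr_right fun hlt => ?_
  have hne : (γ.1 q.2 : ℕ) + 1 ≠ (γ.1 q.1 : ℕ) + 1 := by
    simpa [Fin.val_eq_val] using γ.1.injective.ne hlt.ne'
  simpa [entry, phi] using clt_truncColor_iff (entry γ q.2) (entry γ q.1) hne

lemma phi_eq_iff (γ : CPerm r n) (γ' : CPerm 2 n) :
    phi γ = γ' ↔ γ.1 = γ'.1 ∧ ∀ i, min (γ.2 i : ℕ) 1 = γ'.2 i := by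
  simp [phi, Prod.ext_iff, funext_iff, Fin.ext_iff]

lemma filter_phi_eq (γ' : CPerm 2 n) :
    univ.filter (fun γ : CPerm r n => phi γ = γ') =
      (Fintype.piFinset fun i => univ.filter fun c : Fin r => min (c : ℕ) 1 = γ'.2 i).map
        ⟨Prod.mk γ'.1, Prod.mk_right_injective _⟩ := by
  ext ⟨σ, c⟩
  simp only [mem_filter, mem_univ, true_and, phi_eq_iff]
  simp [and_comm, eq_comm]

section Weights

variable {M : Type*} [CommMonoid M] (p a : M)

def entryWeight (s c : ℕ) : M := if c = 0 then 1 else p ^ (s + c) * a ^ c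

lemma pow_lenG_mul_pow_colG (γ : CPerm r n) :
    p ^ lenG γ * a ^ colG γ = p ^ invG γ * ∏ i, entryWeight p a (γ.1 i) (γ.2 i) := by
  rw [lenG, colG, pow_add, sum_filter, ← prod_pow_eq_pow_sum, ← prod_pow_eq_pow_sum, mul_assoc,
    ← prod_mul_distrib]
  congr 1
  refine prod_congr rfl fun i _ => ?_
  by_cases h : (γ.2 i : ℕ) = 0 <;> simp [entryWeight, h]

end Weights

lemma sum_entryWeight_ne_zero {R : Type*} [CommRing R] (p a : R) (s : ℕ) :
    ∑ c ∈ univ.filter fun c : Fin r => (c : ℕ) ≠ 0, entryWeight p a s c =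
      p ^ (s + 1) * (a * qint (a * p) (r - 1)) := by
  rcases r with _ | m
  · simp [qint]
  rw [sum_filter, Fin.sum_univ_eq_sum_range (fun c => if c ≠ 0 then entryWeight p a s c else 0),
    sum_range_succ', Nat.add_sub_cancel, qint, mul_sum, mul_sum]
  simp only [ne_eq, Nat.add_one_ne_zero, not_false_eq_true, if_true, entryWeight, if_false,
    not_true_eq_false, add_zero]
  refine sum_congr rfl fun k _ => ?_
  ring

lemma sum_entryWeight_truncColor_eq {R : Type*} [CommRing R] (hr : 0 < r) (p a : R) (s : ℕ)
    (b : Fin 2) :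
    ∑ c ∈ univ.filter fun c : Fin r => min (c : ℕ) 1 = b, entryWeight p a s c =
      entryWeight p (a * qint (a * p) (r - 1)) s b := by
  obtain hb | hb : (b : ℕ) = 0 ∨ (b : ℕ) = 1 := by omega
  · have h0 : univ.filter (fun c : Fin r => min (c : ℕ) 1 = 0) = {⟨0, hr⟩} := by
      ext c
      simp [Fin.ext_iff]
    rw [hb, h0, sum_singleton]
    rfl
  · have h1 : univ.filter (fun c : Fin r => min (c : ℕ) 1 = 1) =
        univ.filter fun c : Fin r => (c : ℕ) ≠ 0 := by
      ext c
      simp only [mem_filter, mem_univ, true_and]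
      omega
    rw [hb, h1, sum_entryWeight_ne_zero]
    simp [entryWeight]

/-- Lemma 3.12, part 3: for any `γ̂ ∈ B_n`,
`Σ_{γ ∈ G(r,n), φ(γ)=γ̂} p^{ℓ_G(γ)} a^{col(γ)} = p^{ℓ_B(γ̂)} (a[r−1]_{ap})^{neg(γ̂)}`,
as polynomials in `p = X 0` and `a = X 1`. (For `γ̂ ∈ B_n`, `neg(γ̂) = col(γ̂)`.) -/
theorem stmt6 (r n : ℕ) (hr : 2 ≤ r) (γ' : CPerm 2 n) :
    ∑ γ ∈ univ.filter (fun γ : CPerm r n => phi γ = γ'),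
        (MvPolynomial.X 0 : MvPolynomial (Fin 2) ℤ) ^ lenG γ * (MvPolynomial.X 1) ^ colG γ =
      (MvPolynomial.X 0 : MvPolynomial (Fin 2) ℤ) ^ lenG γ' *
        (MvPolynomial.X 1 * qint (MvPolynomial.X 1 * MvPolynomial.X 0) (r - 1)) ^ colG γ' := by
  set p : MvPolynomial (Fin 2) ℤ := MvPolynomial.X 0
  set a : MvPolynomial (Fin 2) ℤ := MvPolynomial.X 1
  calc _ = ∑ c ∈ Fintype.piFinset (fun i => univ.filter fun c : Fin r => min (c : ℕ) 1 = γ'.2 i),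
          p ^ invG γ' * ∏ i, entryWeight p a (γ'.1 i) (c i) := by
        rw [filter_phi_eq, sum_map]
        refine sum_congr rfl fun c hc => ?_
        have hphi : phi (γ'.1, c) = γ' := by
          simpa [phi_eq_iff] using (Fintype.mem_piFinset.1 hc)
        rw [Function.Embedding.coeFn_mk, pow_lenG_mul_pow_colG, ← invG_phi, hphi]
    _ = p ^ invG γ' * ∏ i, ∑ c ∈ univ.filter (fun c : Fin r => min (c : ℕ) 1 = γ'.2 i),
          entryWeight p a (γ'.1 i) c := by
        rw [prod_univ_sum, mul_sum]
    _ = p ^ invG γ' * ∏ i, entryWeight p (a * qint (a * p) (r - 1)) (γ'.1 i) (γ'.2 i) := by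
        simp only [sum_entryWeight_truncColor_eq (by omega : 0 < r)]
    _ = _ := (pow_lenG_mul_pow_colG _ _ γ').symm

end Paper
end

section
/- For every positive integers r, n, the joint distribution of length and color weight over G(r,n) is given by Σ_{γ ∈ G(r,n)} p^{ℓ_G(γ)} a^{col(γ)} = [n]_p! · Π_{i=1}^n (1 + a p^i [r−1]_{ap}), where [n]_p! = Π_{j=1}^n (1+p+...+p^{j−1}) and [r−1]_{ap} = 1 + (ap) + ... + (ap)^{r−2}. -/
open Finset

namespace Paper

variable {r n : ℕ}

/-!
Encode `γ ∈ G(r,n)` value by value: for each value `w`, record the number of smaller values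
to its left and the color of `w`. Writing `τ = σ⁻¹` for the map from values to positions, this
is the Lehmer code of `τ` paired with the colors, a bijection onto `∏_w [0,w] × ℤ_r`.
For values `u < v` the colored order makes the pair an inversion exactly when `v` precedes `u`
(if `v` is uncolored) or `u` precedes `v` (if `v` is colored), so `ℓ_G` and `col` are sums of
contributions of single values read off from their codes. The generating function therefore
factors over `w`, and the factor of `w` is `[w+1]_p (1 + a p^{w+1} [r-1]_{ap})`.
-/

def lehmerCode (τ : Equiv.Perm (Fin n)) (w : Fin n) : ℕ := #{u | u < w ∧ τ u < τ w}

lemma lehmerCode_le (τ : Equiv.Perm (Fin n)) (w : Fin n) : lehmerCode τ w ≤ w :=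
  calc lehmerCode τ w ≤ #(Iio w) := card_le_card fun u hu => by simp_all
    _ = w := Fin.card_Iio w

lemma val_apply_eq_lehmerCode_add (τ : Equiv.Perm (Fin n)) (w : Fin n) :
    (τ w : ℕ) = lehmerCode τ w + #{u | w < u ∧ τ u < τ w} := by
  have hbefore : #{u | τ u < τ w} = τ w := by
    rw [← Fin.card_Iio, ← card_map τ.toEmbedding]
    congr 1
    ext x
    simp
  rw [← hbefore, lehmerCode, ← card_union_of_disjoint]
  · congr 1
    ext u
    simp only [mem_filter, mem_univ, true_and, mem_union]
    constructor
    · intro h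
      rcases lt_trichotomy u w with huw | rfl | hwu
      exacts [.inl ⟨huw, h⟩, absurd h (lt_irrefl _), .inr ⟨hwu, h⟩]
    · rintro (⟨-, h⟩ | ⟨-, h⟩) <;> exact h
  · exact disjoint_filter.2 fun u _ h h' => lt_asymm h.1 h'.1

/-- By `val_apply_eq_lehmerCode_add`, moving from position `τ w` to `τ' w` must pick up
`τ' w - τ w` further values above `w`, but only the `τ' w - τ w - 1` positions strictly
between are available. -/
lemma not_lt_of_lehmerCode_eq {τ τ' : Equiv.Perm (Fin n)} {w : Fin n}
    (hcode : lehmerCode τ w = lehmerCode τ' w) (habove : ∀ u, w < u → τ u = τ' u) :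
    ¬ τ w < τ' w := by
  intro hlt
  have hsub : ({u | w < u ∧ τ' u < τ' w} : Finset (Fin n)) ⊆
      ({u | w < u ∧ τ u < τ w} : Finset (Fin n)) ∪ (Ioo (τ w) (τ' w)).map τ.symm.toEmbedding := by
    intro u hu
    simp only [mem_filter, mem_univ, true_and] at hu
    rw [← habove u hu.1] at hu
    rcases lt_or_ge (τ u) (τ w) with h | h
    · exact mem_union_left _ (by simp [hu.1, h])
    · refine mem_union_right _ (mem_map.2 ⟨τ u, mem_Ioo.2 ⟨?_, hu.2⟩, by simp⟩)
      exact lt_of_le_of_ne h fun he => (τ.injective he ▸ hu.1).ne rfl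
  have hcard := (card_le_card hsub).trans (card_union_le _ _)
  rw [card_map, Fin.card_Ioo] at hcard
  have := val_apply_eq_lehmerCode_add τ w
  have := val_apply_eq_lehmerCode_add τ' w
  have : (τ w : ℕ) < τ' w := hlt
  omega

lemma lehmerCode_injective : Function.Injective (lehmerCode (n := n)) := by
  intro τ τ' h
  ext w : 1
  induction w using WellFoundedGT.induction with
  | _ w ih =>
    have hcode := congrFun h w
    exact le_antisymm (not_lt.1 (not_lt_of_lehmerCode_eq hcode.symm fun u hu => (ih u hu).symm))
      (not_lt.1 (not_lt_of_lehmerCode_eq hcode ih))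

lemma card_lt_and_apply_lt_eq_sub_lehmerCode (τ : Equiv.Perm (Fin n)) (w : Fin n) :
    #{u | u < w ∧ τ w < τ u} = w - lehmerCode τ w := by
  have hsplit : #{u | u < w ∧ τ w < τ u} + lehmerCode τ w = #(Iio w) := by
    rw [lehmerCode, ← card_union_of_disjoint]
    · congr 1
      ext u
      simp only [mem_filter, mem_univ, true_and, mem_union, mem_Iio]
      refine ⟨by rintro (⟨h, -⟩ | ⟨h, -⟩) <;> exact h, fun h => ?_⟩
      rcases lt_or_gt_of_ne (τ.injective.ne h.ne) with h' | h'
      exacts [.inr ⟨h, h'⟩, .inl ⟨h, h'⟩]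
    · exact disjoint_filter.2 fun u _ h h' => lt_asymm h.2 h'.2
  rw [Fin.card_Iio] at hsplit
  omega

lemma clt_iff_of_fst_lt {x y : ℕ × ℕ} (h : x.1 < y.1) : clt x y ↔ y.2 = 0 := by
  unfold clt; omega

lemma clt_swap_iff_of_fst_lt {x y : ℕ × ℕ} (h : x.1 < y.1) : clt y x ↔ y.2 ≠ 0 := by
  unfold clt; omega

lemma ite_inversion_add_ite_inversion (τ : Equiv.Perm (Fin n)) (c : Fin n → ℕ) {u v : Fin n}
    (huv : u < v) :
    ((if τ u < τ v ∧ clt ((v : ℕ) + 1, c v) ((u : ℕ) + 1, c u) then 1 else 0) +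
      if τ v < τ u ∧ clt ((u : ℕ) + 1, c u) ((v : ℕ) + 1, c v) then 1 else 0) =
    if (if c v = 0 then τ v < τ u else τ u < τ v) then 1 else 0 := by
  have h : ((u : ℕ) + 1, c u).1 < ((v : ℕ) + 1, c v).1 := by simpa using huv
  simp only [clt_swap_iff_of_fst_lt h, clt_iff_of_fst_lt h]
  by_cases hc : c v = 0 <;> simp [hc]

lemma sum_sum_eq_of_add_swap {α : Type*} [Fintype α] {f g : α → α → ℕ}
    (h : ∀ u v, f u v + f v u = g u v + g v u) : ∑ u, ∑ v, f u v = ∑ u, ∑ v, g u v := by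
  have htwice (k : α → α → ℕ) : 2 * ∑ u, ∑ v, k u v = ∑ u, ∑ v, (k u v + k v u) := by
    rw [two_mul]
    nth_rewrite 2 [sum_comm]
    simp only [← sum_add_distrib]
  have := htwice f
  simp only [h, ← htwice g] at this
  omega

def valueColor (γ : CPerm r n) (w : Fin n) : Fin r := γ.2 (γ.1⁻¹ w)

def coloredLehmerCode (γ : CPerm r n) (w : Fin n) : Fin (w + 1) × Fin r :=
  (⟨lehmerCode γ.1⁻¹ w, Nat.lt_succ_of_le (lehmerCode_le _ w)⟩, valueColor γ w)

lemma coloredLehmerCode_injective :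
    Function.Injective (coloredLehmerCode : CPerm r n → ∀ w : Fin n, Fin (w + 1) × Fin r) := by
  intro γ δ h
  have hperm : γ.1 = δ.1 := inv_injective <| lehmerCode_injective <| funext fun w =>
    congrArg (fun x => ((x w).1 : ℕ)) h
  refine Prod.ext hperm (funext fun i => ?_)
  have := congrArg (fun x => (x (γ.1 i)).2) h
  simpa [coloredLehmerCode, valueColor, hperm] using this

lemma coloredLehmerCode_bijective :
    Function.Bijective (coloredLehmerCode : CPerm r n → ∀ w : Fin n, Fin (w + 1) × Fin r) := by
  refine (Fintype.bijective_iff_injective_and_card _).2 ⟨coloredLehmerCode_injective, ?_⟩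
  simp only [Fintype.card_prod, Fintype.card_perm, Fintype.card_fun, Fintype.card_pi,
    Fintype.card_fin, prod_mul_distrib, prod_const, card_univ]
  rw [Fin.prod_univ_eq_prod_range (· + 1), prod_range_add_one_eq_factorial]

lemma invG_eq_sum (γ : CPerm r n) :
    invG γ = ∑ w, if (valueColor γ w : ℕ) = 0 then w - lehmerCode γ.1⁻¹ w
      else lehmerCode γ.1⁻¹ w := by
  set τ := γ.1⁻¹
  set c : Fin n → ℕ := fun w => valueColor γ w
  have hf : invG γ = ∑ u, ∑ v,
      if τ u < τ v ∧ clt ((v : ℕ) + 1, c v) ((u : ℕ) + 1, c u) then 1 else 0 := by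
    rw [invG, card_filter, Fintype.sum_prod_type, ← Equiv.sum_comp τ]
    refine sum_congr rfl fun u _ => ?_
    rw [← Equiv.sum_comp τ]
    simp only [entry, τ, c, valueColor, Equiv.Perm.coe_inv, Equiv.apply_symm_apply]
    congr!
  have hsymm (u v : Fin n) :
      ((if τ u < τ v ∧ clt ((v : ℕ) + 1, c v) ((u : ℕ) + 1, c u) then 1 else 0) +
        if τ v < τ u ∧ clt ((u : ℕ) + 1, c u) ((v : ℕ) + 1, c v) then 1 else 0) =
      ((if v < u ∧ (if c u = 0 then τ u < τ v else τ v < τ u) then 1 else 0) +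
        if u < v ∧ (if c v = 0 then τ v < τ u else τ u < τ v) then 1 else 0) := by
    rcases lt_trichotomy u v with huv | rfl | hvu
    · simp [ite_inversion_add_ite_inversion τ c huv, huv, huv.not_gt]
    · simp
    · rw [add_comm, ite_inversion_add_ite_inversion τ c hvu]
      simp [hvu, hvu.not_gt]
  rw [hf, sum_sum_eq_of_add_swap hsymm]
  refine sum_congr rfl fun w _ => ?_
  simp only [← card_filter]
  split_ifs
  exacts [card_lt_and_apply_lt_eq_sub_lehmerCode τ w, rfl]

/-- The share of `lenG` carried by the (0-based) value `w` that has `k` smaller values to its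
left and color `c`: its inversions with smaller values (`w - k` if uncolored, `k` if colored),
plus the term `σ(i) + c - 1 = w + c` for a colored entry. -/
def lengthContribution (w k c : ℕ) : ℕ := if c = 0 then w - k else k + w + c

lemma lenG_eq_sum (γ : CPerm r n) :
    lenG γ = ∑ w : Fin n, lengthContribution w (lehmerCode γ.1⁻¹ w) (valueColor γ w) := by
  have hcolored : ∑ i with (γ.2 i : ℕ) ≠ 0, ((γ.1 i : ℕ) + γ.2 i) =
      ∑ w, if (valueColor γ w : ℕ) = 0 then 0 else (w : ℕ) + valueColor γ w := by
    rw [sum_filter]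
    exact Fintype.sum_equiv γ.1 _ _ fun i => by simp [valueColor, ite_not]
  rw [lenG, invG_eq_sum, hcolored, ← sum_add_distrib]
  refine sum_congr rfl fun w _ => ?_
  unfold lengthContribution
  split_ifs <;> omega

lemma colG_eq_sum (γ : CPerm r n) : colG γ = ∑ w, (valueColor γ w : ℕ) :=
  Fintype.sum_equiv γ.1 _ _ fun i => by simp [valueColor]

lemma sum_pow_lengthContribution {R : Type*} [CommRing R] (p a : R) (hr : 0 < r) (w : ℕ) :
    ∑ y : Fin (w + 1) × Fin r, p ^ lengthContribution w y.1 y.2 * a ^ (y.2 : ℕ) =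
      qint p (w + 1) * (1 + a * p ^ (w + 1) * qint (a * p) (r - 1)) := by
  obtain ⟨s, rfl⟩ : ∃ s, r = s + 1 := ⟨r - 1, by omega⟩
  rw [Fintype.sum_prod_type_right, Fin.sum_univ_succ]
  have huncolored : ∑ k : Fin (w + 1), p ^ (w - k : ℕ) = qint p (w + 1) := by
    rw [Fin.sum_univ_eq_sum_range (fun k => p ^ (w - k)), qint, ← sum_range_reflect]
    exact sum_congr rfl fun k hk => by
      rw [Nat.add_sub_cancel, Nat.sub_sub_self (Nat.lt_succ_iff.1 (mem_range.1 hk))]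
  have hcolored (j : ℕ) : ∑ k : Fin (w + 1), p ^ ((k : ℕ) + w + (j + 1)) * a ^ (j + 1) =
      qint p (w + 1) * (a * p ^ (w + 1) * (a * p) ^ j) := by
    rw [Fin.sum_univ_eq_sum_range (fun k => p ^ (k + w + (j + 1)) * a ^ (j + 1)), qint, sum_mul]
    exact sum_congr rfl fun k _ => by ring
  simp only [lengthContribution, Fin.val_zero, Fin.val_succ, if_pos, Nat.succ_ne_zero,
    if_false, pow_zero, mul_one, huncolored, hcolored, Nat.add_sub_cancel, qint, ← mul_sum,
    Fin.sum_univ_eq_sum_range (fun j => (a * p) ^ j)]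
  ring

theorem sum_pow_lenG_mul_pow_colG {R : Type*} [CommRing R] (p a : R) (hr : 0 < r) :
    ∑ γ : CPerm r n, p ^ lenG γ * a ^ colG γ =
      qfact p n * ∏ i ∈ range n, (1 + a * p ^ (i + 1) * qint (a * p) (r - 1)) := by
  let weight (w : Fin n) (y : Fin (w + 1) × Fin r) : R :=
    p ^ lengthContribution w y.1 y.2 * a ^ (y.2 : ℕ)
  calc ∑ γ : CPerm r n, p ^ lenG γ * a ^ colG γ
      = ∑ γ : CPerm r n, ∏ w, weight w (coloredLehmerCode γ w) := by
        simp only [lenG_eq_sum, colG_eq_sum, ← prod_pow_eq_pow_sum, ← prod_mul_distrib]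
        rfl
    _ = ∑ x : ∀ w : Fin n, Fin (w + 1) × Fin r, ∏ w, weight w (x w) :=
        Fintype.sum_bijective _ coloredLehmerCode_bijective _ _ fun _ => rfl
    _ = ∏ w : Fin n, ∑ y, weight w y := (Fintype.prod_sum weight).symm
    _ = ∏ w : Fin n, qint p (w + 1) * (1 + a * p ^ ((w : ℕ) + 1) * qint (a * p) (r - 1)) :=
        prod_congr rfl fun w _ => sum_pow_lengthContribution p a hr w
    _ = _ := by
        rw [prod_mul_distrib, Fin.prod_univ_eq_prod_range (fun i => qint p (i + 1)),
          Fin.prod_univ_eq_prod_range (fun i => 1 + a * p ^ (i + 1) * qint (a * p) (r - 1)), qfact]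

theorem stmt8_general (r n : ℕ) (hr : 0 < r) :
    ∑ γ : CPerm r n,
        (MvPolynomial.X 0 : MvPolynomial (Fin 2) ℤ) ^ lenG γ * (MvPolynomial.X 1) ^ colG γ =
      qfact (MvPolynomial.X 0 : MvPolynomial (Fin 2) ℤ) n *
        ∏ i ∈ range n,
          (1 + MvPolynomial.X 1 * (MvPolynomial.X 0) ^ (i + 1) *
            qint (MvPolynomial.X 1 * MvPolynomial.X 0) (r - 1)) :=
  sum_pow_lenG_mul_pow_colG _ _ hr

/-- equation (4.10): the joint distribution of length and color weight:
`Σ_{γ ∈ G(r,n)} p^{ℓ_G(γ)} a^{col(γ)} = [n]_p! · Π_{i=1}^n (1 + a p^i [r−1]_{ap})`,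
as polynomials in `p = X 0` and `a = X 1`. -/
theorem stmt8 (r n : ℕ) (hr : 0 < r) (hn : 0 < n) :
    ∑ γ : CPerm r n,
        (MvPolynomial.X 0 : MvPolynomial (Fin 2) ℤ) ^ lenG γ * (MvPolynomial.X 1) ^ colG γ =
      qfact (MvPolynomial.X 0 : MvPolynomial (Fin 2) ℤ) n *
        ∏ i ∈ range n,
          (1 + MvPolynomial.X 1 * (MvPolynomial.X 0) ^ (i + 1) *
            qint (MvPolynomial.X 1 * MvPolynomial.X 0) (r - 1)) :=
  stmt8_general r n hr

end Paper
end

section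
/- The generating function of length over G(r,n) is Σ_{γ ∈ G(r,n)} p^{ℓ_G(γ)} = [n]_p! · Π_{i=0}^{n−1} (1 + p^{i+1}[r−1]_p), where [r−1]_p = 1+p+...+p^{r−2}. -/
open Finset

namespace Paper

variable {r n : ℕ}

/-! ### Auxiliary lemmas for `stmt9` -/

section Stmt9Aux

lemma clt_lt_top {m : ℕ} {a : ℕ × ℕ} (h : a.1 ≤ m) : clt a (m + 1, 0) := by
  obtain ⟨v, u⟩ := a
  simp only at h
  unfold clt
  dsimp only
  omega

lemma not_top_clt {m : ℕ} {a : ℕ × ℕ} (h : a.1 ≤ m) : ¬ clt (m + 1, 0) a := by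
  obtain ⟨v, u⟩ := a
  simp only at h
  unfold clt
  dsimp only
  omega

lemma bot_clt {m c0 : ℕ} {a : ℕ × ℕ} (hc : 0 < c0) (h : a.1 ≤ m) : clt (m + 1, c0) a := by
  obtain ⟨v, u⟩ := a
  simp only at h
  unfold clt
  dsimp only
  omega

lemma not_clt_bot {m c0 : ℕ} {a : ℕ × ℕ} (hc : 0 < c0) (h : a.1 ≤ m) : ¬ clt a (m + 1, c0) := by
  obtain ⟨v, u⟩ := a
  simp only at h
  unfold clt
  dsimp only
  omega

/-- Insert a new maximal value `n` (i.e. displayed `n+1`) at position `k`. -/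
def ins (k : Fin (n + 1)) (τ : Equiv.Perm (Fin n)) : Equiv.Perm (Fin (n + 1)) :=
  ((finSuccEquiv' k).trans (Equiv.optionCongr τ)).trans (finSuccEquiv' (Fin.last n)).symm

lemma ins_self (k : Fin (n + 1)) (τ : Equiv.Perm (Fin n)) : ins k τ k = Fin.last n := by
  simp [ins, finSuccEquiv'_at, finSuccEquiv'_symm_none]

lemma ins_succAbove (k : Fin (n + 1)) (τ : Equiv.Perm (Fin n)) (i : Fin n) :
    ins k τ (k.succAbove i) = (τ i).castSucc := by
  simp [ins, finSuccEquiv'_succAbove, finSuccEquiv'_symm_some, Fin.succAbove_last]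

/-- The insertion map `((k,c),(τ,d)) ↦ γ`. -/
def bigMap (r n : ℕ) : (Fin (n + 1) × Fin r) × CPerm r n → CPerm r (n + 1) :=
  fun x => (ins x.1.1 x.2.1, x.1.1.insertNth x.1.2 x.2.2)

lemma bigMap_bijective (r n : ℕ) : Function.Bijective (bigMap r n) := by
  rw [Fintype.bijective_iff_injective_and_card]
  constructor
  · rintro ⟨⟨k, c⟩, τ, d⟩ ⟨⟨k', c'⟩, τ', d'⟩ h
    simp only [bigMap, Prod.mk.injEq] at h
    obtain ⟨h1, h2⟩ := h
    have hk : k = k' := by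
      have e1 : ins k' τ' k = Fin.last n := by rw [← h1]; exact ins_self k τ
      exact (ins k' τ').injective (e1.trans (ins_self k' τ').symm)
    subst hk
    have hτ : τ = τ' := by
      refine Equiv.ext fun i => ?_
      have : (τ i).castSucc = (τ' i).castSucc := by
        rw [← ins_succAbove k τ i, ← ins_succAbove k τ' i, h1]
      exact Fin.castSucc_injective _ this
    have hc : c = c' := by
      have := congrFun h2 k
      simpa [Fin.insertNth_apply_same] using this
    have hd : d = d' := by
      funext i
      have := congrFun h2 (k.succAbove i)
      simpa [Fin.insertNth_apply_succAbove] using this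
    subst hτ; subst hc; subst hd; rfl
  · simp [Fintype.card_perm, Fintype.card_fun, Nat.factorial_succ, pow_succ]
    ring

lemma invG_eq (γ : CPerm r n) :
    invG γ = ∑ i : Fin n, ∑ j : Fin n,
      (if i < j ∧ clt (entry γ j) (entry γ i) then (1 : ℕ) else 0) := by
  rw [invG, Finset.card_filter, Fintype.sum_prod_type]

lemma sum_ite_le (m K : ℕ) : ∑ j ∈ range m, (if K ≤ j then (1 : ℕ) else 0) = m - K := by
  induction m with
  | zero => simp
  | succ m ih => rw [Finset.sum_range_succ, ih]; split_ifs <;> omega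

lemma sum_ite_lt (m K : ℕ) : ∑ j ∈ range m, (if j < K then (1 : ℕ) else 0) = min K m := by
  induction m with
  | zero => simp
  | succ m ih => rw [Finset.sum_range_succ, ih]; split_ifs <;> omega

lemma succAbove_val (k : Fin (n + 1)) (j : Fin n) :
    (k.succAbove j : ℕ) = if (j : ℕ) < (k : ℕ) then (j : ℕ) else (j : ℕ) + 1 := by
  by_cases h : (j : ℕ) < (k : ℕ)
  · rw [Fin.succAbove_of_castSucc_lt _ _ (by rwa [Fin.lt_def]), if_pos h, Fin.coe_castSucc]
  · rw [Fin.succAbove_of_le_castSucc _ _ (by rw [Fin.le_def, Fin.coe_castSucc]; omega),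
      if_neg h, Fin.val_succ]

lemma lt_succAbove_iff' (k : Fin (n + 1)) (j : Fin n) :
    k < k.succAbove j ↔ (k : ℕ) ≤ (j : ℕ) := by
  rw [Fin.lt_def, succAbove_val]; split_ifs <;> omega

lemma succAbove_lt_iff' (k : Fin (n + 1)) (j : Fin n) :
    k.succAbove j < k ↔ (j : ℕ) < (k : ℕ) := by
  rw [Fin.lt_def, succAbove_val]; split_ifs <;> omega

lemma lenG_bigMap {r n : ℕ} (k : Fin (n + 1)) (c : Fin r) (τ : Equiv.Perm (Fin n))
    (d : Fin n → Fin r) :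
    lenG (ins k τ, k.insertNth c d) =
      lenG (τ, d) + (if (c : ℕ) = 0 then n - (k : ℕ) else (k : ℕ) + n + (c : ℕ)) := by
  have hek : entry (r := r) (ins k τ, k.insertNth c d) k = (n + 1, (c : ℕ)) := by
    simp [entry, ins_self, Fin.insertNth_apply_same, Fin.val_last]
  have hes : ∀ i, entry (r := r) (ins k τ, k.insertNth c d) (k.succAbove i)
      = entry (τ, d) i := by
    intro i
    simp [entry, ins_succAbove, Fin.insertNth_apply_succAbove]
  have hv : ∀ i : Fin n, (entry ((τ, d) : CPerm r n) i).1 ≤ n := fun i => (τ i).isLt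
  have hA : (∑ i : Fin (n + 1), ∑ j : Fin (n + 1),
        (if i < j ∧ clt (entry (r := r) (ins k τ, k.insertNth c d) j)
          (entry (r := r) (ins k τ, k.insertNth c d) i) then (1 : ℕ) else 0))
      = (∑ i : Fin n, ∑ j : Fin n,
          (if i < j ∧ clt (entry ((τ, d) : CPerm r n) j) (entry ((τ, d) : CPerm r n) i)
            then (1 : ℕ) else 0))
        + (if (c : ℕ) = 0 then n - (k : ℕ) else (k : ℕ)) := by
    simp only [Fin.sum_univ_succAbove _ k]
    rw [Finset.sum_add_distrib]
    have e0 : (if k < k ∧ clt (entry (r := r) (ins k τ, k.insertNth c d) k)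
        (entry (r := r) (ins k τ, k.insertNth c d) k) then (1 : ℕ) else 0) = 0 := by
      simp [lt_irrefl]
    have e3 : ∀ i j : Fin n,
        (if k.succAbove i < k.succAbove j ∧
            clt (entry (r := r) (ins k τ, k.insertNth c d) (k.succAbove j))
              (entry (r := r) (ins k τ, k.insertNth c d) (k.succAbove i)) then (1 : ℕ) else 0)
        = (if i < j ∧ clt (entry ((τ, d) : CPerm r n) j) (entry ((τ, d) : CPerm r n) i)
            then (1 : ℕ) else 0) := by
      intro i j
      simp only [hes, Fin.succAbove_lt_succAbove_iff]
    by_cases hc : (c : ℕ) = 0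
    · have e1 : ∀ j : Fin n,
          (if k < k.succAbove j ∧
              clt (entry (r := r) (ins k τ, k.insertNth c d) (k.succAbove j))
                (entry (r := r) (ins k τ, k.insertNth c d) k) then (1 : ℕ) else 0)
          = (if (k : ℕ) ≤ (j : ℕ) then 1 else 0) := by
        intro j
        rw [hes, hek, hc]
        have h1 : clt (entry ((τ, d) : CPerm r n) j) (n + 1, 0) := clt_lt_top (hv j)
        simp [h1, lt_succAbove_iff']
      have e2 : ∀ i : Fin n,
          (if k.succAbove i < k ∧
              clt (entry (r := r) (ins k τ, k.insertNth c d) k)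
                (entry (r := r) (ins k τ, k.insertNth c d) (k.succAbove i))
            then (1 : ℕ) else 0) = 0 := by
        intro i
        rw [hes, hek, hc]
        have h1 : ¬ clt ((n + 1 : ℕ), (0 : ℕ)) (entry ((τ, d) : CPerm r n) i) :=
          not_top_clt (hv i)
        simp [h1]
      simp only [e0, e1, e2, e3, zero_add, Finset.sum_const_zero]
      rw [if_pos hc, Fin.sum_univ_eq_sum_range (fun j => if (k : ℕ) ≤ j then (1 : ℕ) else 0) n,
        sum_ite_le]
      omega
    · have e1 : ∀ j : Fin n,
          (if k < k.succAbove j ∧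
              clt (entry (r := r) (ins k τ, k.insertNth c d) (k.succAbove j))
                (entry (r := r) (ins k τ, k.insertNth c d) k) then (1 : ℕ) else 0) = 0 := by
        intro j
        rw [hes, hek]
        have h1 : ¬ clt (entry ((τ, d) : CPerm r n) j) (n + 1, (c : ℕ)) :=
          not_clt_bot (by omega) (hv j)
        simp [h1]
      have e2 : ∀ i : Fin n,
          (if k.succAbove i < k ∧
              clt (entry (r := r) (ins k τ, k.insertNth c d) k)
                (entry (r := r) (ins k τ, k.insertNth c d) (k.succAbove i))
            then (1 : ℕ) else 0)
          = (if (i : ℕ) < (k : ℕ) then 1 else 0) := by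
        intro i
        rw [hes, hek]
        have h1 : clt ((n + 1 : ℕ), (c : ℕ)) (entry ((τ, d) : CPerm r n) i) :=
          bot_clt (by omega) (hv i)
        simp [h1, succAbove_lt_iff']
      simp only [e0, e1, e2, e3, Finset.sum_const_zero, zero_add]
      rw [if_neg hc, Fin.sum_univ_eq_sum_range (fun j => if j < (k : ℕ) then (1 : ℕ) else 0) n,
        sum_ite_lt]
      have hk := k.isLt
      omega
  have hB : (∑ i : Fin (n + 1),
        (if ((k.insertNth (α := fun _ => Fin r) c d i : Fin r) : ℕ) ≠ 0 then
          ((ins k τ i : ℕ) + ((k.insertNth (α := fun _ => Fin r) c d i : Fin r) : ℕ))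
          else 0))
      = (∑ i : Fin n, (if ((d i : ℕ) ≠ 0) then ((τ i : ℕ) + (d i : ℕ)) else 0))
        + (if (c : ℕ) = 0 then 0 else n + (c : ℕ)) := by
    rw [Fin.sum_univ_succAbove _ k]
    simp only [Fin.insertNth_apply_same, Fin.insertNth_apply_succAbove, ins_self,
      ins_succAbove, Fin.val_last, Fin.coe_castSucc]
    rw [add_comm]
    congr 1
    split_ifs <;> omega
  unfold lenG
  rw [invG_eq, invG_eq, Finset.sum_filter, Finset.sum_filter]
  dsimp only
  rw [hA, hB]
  split_ifs <;> omega

end Stmt9Aux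

/-- equation (2.7): the generating function of length over `G(r,n)`:
`Σ_{γ ∈ G(r,n)} p^{ℓ_G(γ)} = [n]_p! · Π_{i=0}^{n−1} (1 + p^{i+1} [r−1]_p)`. -/
theorem stmt9 (r n : ℕ) (hr : 0 < r) :
    ∑ γ : CPerm r n, (Polynomial.X : Polynomial ℤ) ^ lenG γ =
      qfact (Polynomial.X : Polynomial ℤ) n *
        ∏ i ∈ range n, (1 + Polynomial.X ^ (i + 1) * qint Polynomial.X (r - 1)) := by
  obtain ⟨m, rfl⟩ : ∃ m, r = m + 1 := ⟨r - 1, by omega⟩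
  clear hr
  induction n with
  | zero =>
    have h1 : ∀ γ : CPerm (m + 1) 0, lenG γ = 0 := fun γ => by simp [lenG, invG]
    have h2 : Fintype.card (CPerm (m + 1) 0) = 1 := by
      simp [Fintype.card_perm, Fintype.card_fun]
    simp only [h1, pow_zero]
    rw [Finset.sum_const, Finset.card_univ, h2, one_smul]
    simp [qfact]
  | succ n ih =>
    rw [← Fintype.sum_bijective (bigMap (m + 1) n) (bigMap_bijective (m + 1) n)
        (fun x => (Polynomial.X : Polynomial ℤ) ^
          (lenG x.2 + (if ((x.1.2 : ℕ)) = 0 then n - (x.1.1 : ℕ)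
            else (x.1.1 : ℕ) + n + (x.1.2 : ℕ))))
        (fun γ => (Polynomial.X : Polynomial ℤ) ^ lenG γ)
        (fun x => by dsimp only [bigMap]; rw [lenG_bigMap])]
    have hW : (∑ a : Fin (n + 1) × Fin (m + 1), (Polynomial.X : Polynomial ℤ) ^
          (if ((a.2 : ℕ)) = 0 then n - (a.1 : ℕ) else (a.1 : ℕ) + n + (a.2 : ℕ)))
        = qint Polynomial.X (n + 1) * (1 + Polynomial.X ^ (n + 1) * qint Polynomial.X m) := by
      rw [Fintype.sum_prod_type]
      have h1 : ∀ k : Fin (n + 1), (∑ c : Fin (m + 1), (Polynomial.X : Polynomial ℤ) ^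
            (if ((c : ℕ)) = 0 then n - (k : ℕ) else (k : ℕ) + n + (c : ℕ)))
          = Polynomial.X ^ (n - (k : ℕ))
            + Polynomial.X ^ (k : ℕ) * (Polynomial.X ^ (n + 1) * qint Polynomial.X m) := by
        intro k
        rw [Fin.sum_univ_succ]
        simp only [Fin.val_zero, Fin.val_succ, if_pos rfl]
        congr 1
        rw [qint, Finset.mul_sum, Finset.mul_sum, ← Fin.sum_univ_eq_sum_range]
        refine Finset.sum_congr rfl fun c _ => ?_
        rw [if_neg (by omega), ← pow_add, ← pow_add]
        congr 1
        omega
      simp only [h1]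
      rw [Finset.sum_add_distrib, ← Finset.sum_mul]
      have h2 : (∑ k : Fin (n + 1), (Polynomial.X : Polynomial ℤ) ^ (n - (k : ℕ)))
          = qint Polynomial.X (n + 1) := by
        rw [Fin.sum_univ_eq_sum_range (fun j => (Polynomial.X : Polynomial ℤ) ^ (n - j)) (n + 1),
          qint, ← Finset.sum_range_reflect (fun j => (Polynomial.X : Polynomial ℤ) ^ j) (n + 1)]
        exact Finset.sum_congr rfl fun j hj => rfl
      have h3 : (∑ k : Fin (n + 1), (Polynomial.X : Polynomial ℤ) ^ (k : ℕ))
          = qint Polynomial.X (n + 1) := by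
        rw [Fin.sum_univ_eq_sum_range (fun j => (Polynomial.X : Polynomial ℤ) ^ j) (n + 1), qint]
      rw [h2, h3]
      ring
    simp only [pow_add]
    rw [Fintype.sum_prod_type]
    dsimp only
    have hS : ∀ x : Fin (n + 1) × Fin (m + 1), (∑ y : CPerm (m + 1) n,
        (Polynomial.X : Polynomial ℤ) ^ lenG y * Polynomial.X ^
          (if ((x.2 : ℕ)) = 0 then n - (x.1 : ℕ) else (x.1 : ℕ) + n + (x.2 : ℕ))) =
        (∑ y : CPerm (m + 1) n, (Polynomial.X : Polynomial ℤ) ^ lenG y) * Polynomial.X ^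
          (if ((x.2 : ℕ)) = 0 then n - (x.1 : ℕ) else (x.1 : ℕ) + n + (x.2 : ℕ)) :=
      fun x => (Finset.sum_mul _ _ _).symm
    simp only [hS]
    rw [← Finset.mul_sum, ih, hW]
    have hm : m + 1 - 1 = m := by omega
    rw [hm]
    unfold qfact
    rw [Finset.prod_range_succ, Finset.prod_range_succ]
    simp only [pow_succ, pow_zero, one_mul]
    ring

end Paper
end
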